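/- arXiv:1006.4895 — 2 statements merged into one kernel-verified Lean document; each statement's English description precedes it below -/
import Mathlib

section
/- For a given polynomial p in n variables over the integers, consider the optimization problem: minimize u subject to (1 - u) * p(x_1,...,x_n) = 0, with u a non-negative integer and x a vector of non-negative integers. This problem is always feasible, and its optimal value is 0 if p(x_1,...,x_n) = 0 has a solution over the non-negative integers, and 1 otherwise. -/
theorem one_sub_natCast_mul_eq_zero_iff {u : ℕ} {v : ℤ} :
    (1 - (u : ℤ)) * v = 0 ↔ u = 1 ∨ v = 0 := by
  rw [mul_eq_zero, sub_eq_zero]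
  norm_cast
  rw [eq_comm]

open Classical in
theorem isLeast_setOf_one_sub_natCast_mul_eq_zero {X : Type*} [Nonempty X] (f : X → ℤ) :
    IsLeast {u : ℕ | ∃ x, (1 - (u : ℤ)) * f x = 0} (if ∃ x, f x = 0 then 0 else 1) := by
  simp only [one_sub_natCast_mul_eq_zero_iff]
  split_ifs with h
  · obtain ⟨x, hx⟩ := h
    exact ⟨⟨x, Or.inr hx⟩, fun u _ => u.zero_le⟩
  · refine ⟨⟨Classical.arbitrary X, Or.inl rfl⟩, ?_⟩
    rintro u ⟨x, rfl | hx⟩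
    · exact le_rfl
    · exact absurd ⟨x, hx⟩ h

open Classical in
theorem jeroslow_construction (n : ℕ) (p : MvPolynomial (Fin n) ℤ) :
    (∃ u : ℕ, ∃ x : Fin n → ℕ,
      ((1 : ℤ) - (u : ℤ)) * MvPolynomial.eval (fun i => (x i : ℤ)) p = 0) ∧
    IsLeast {u : ℕ | ∃ x : Fin n → ℕ,
        ((1 : ℤ) - (u : ℤ)) * MvPolynomial.eval (fun i => (x i : ℤ)) p = 0}
      (if ∃ x : Fin n → ℕ, MvPolynomial.eval (fun i => (x i : ℤ)) p = 0 then 0 else 1) := by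
  have hleast := isLeast_setOf_one_sub_natCast_mul_eq_zero
    fun x : Fin n → ℕ => MvPolynomial.eval (fun i => (x i : ℤ)) p
  exact ⟨⟨_, hleast.1⟩, hleast⟩
end

section
/- For the mixed-integer linear problem with feasible region S = {(1/2, 1)} ∪ {(x, 0) : x ∈ [0, 1]} and objective maximize z (the second coordinate), restricting x to the grid (1/m) Z yields: for even m the unique optimal solution is (1/2, 1), while for odd m the unique optimal solution over the grid attains objective value 0. Hence the sequence of grid optima has two distinct limit points and does not converge. -/
/-! The isolated point `(1/2, 1)` lies on the grid `x ∈ (1/m)ℤ` exactly when `m` is even; for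
odd `m` only the segment `z = 0` meets the grid, so the grid optima alternate between two
distinct points. -/

open Filter Topology

theorem even_iff_exists_int_div_eq_half {m : ℕ} (hm : m ≠ 0) :
    Even m ↔ ∃ j : ℤ, (1 / 2 : ℝ) = j / m := by
  have hm' : (m : ℝ) ≠ 0 := Nat.cast_ne_zero.2 hm
  constructor
  · rintro ⟨k, rfl⟩
    have hk : (k : ℝ) ≠ 0 := by norm_cast; omega
    refine ⟨k, ?_⟩
    push_cast
    field_simp
    ring
  · rintro ⟨j, hj⟩
    have hmj : ((m : ℤ) : ℝ) = ((j + j : ℤ) : ℝ) := by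
      push_cast
      field_simp at hj
      linarith
    exact (Int.even_coe_nat m).1 ⟨j, Int.cast_injective hmj⟩

theorem not_tendsto_ite_even {X : Type*} [TopologicalSpace X] [T2Space X] {a b : X}
    (hab : a ≠ b) (L : X) :
    ¬ Tendsto (fun n : ℕ => if Even n then a else b) atTop (𝓝 L) := by
  intro h
  have ha : a = L := by
    simpa [Function.comp_def] using
      h.comp (StrictMono.tendsto_atTop (φ := fun n => 2 * n) fun _ _ h => by dsimp only; omega)
  have hb : b = L := by
    simpa [Function.comp_def, Nat.even_add_one] using
      h.comp (StrictMono.tendsto_atTop (φ := fun n => 2 * n + 1) fun _ _ h => by dsimp only; omega)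
  exact hab (ha.trans hb.symm)

open Filter in
theorem grid_optima_two_limit_points :
    ∀ S : Set (ℝ × ℝ), S = {((1:ℝ)/2, (1:ℝ))} ∪ {p : ℝ × ℝ | p.2 = 0 ∧ p.1 ∈ Set.Icc (0:ℝ) 1} →
    (∀ m : ℕ, 0 < m → Even m →
      ((1/2, 1) ∈ S ∧ (∃ j : ℤ, ((1:ℝ)/2) = (j : ℝ) / m) ∧
        ∀ p ∈ S, (∃ j : ℤ, p.1 = (j : ℝ) / m) → p ≠ ((1:ℝ)/2, 1) → p.2 < 1)) ∧
    (∀ m : ℕ, 0 < m → ¬ Even m →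
      ∀ p ∈ S, (∃ j : ℤ, p.1 = (j : ℝ) / m) → p.2 = 0) ∧
    ¬ ∃ L : ℝ × ℝ, Tendsto
        (fun m : ℕ => if Even m then (((1:ℝ)/2, (1:ℝ)) : ℝ × ℝ) else ((0:ℝ), (0:ℝ)))
        atTop (nhds L) := by
  rintro S rfl
  refine ⟨fun m hm hev => ⟨Or.inl rfl, (even_iff_exists_int_div_eq_half hm.ne').1 hev, ?_⟩,
    ?_, ?_⟩
  · rintro p (hp | hp) - hne
    · exact absurd hp hne
    · simp [hp.1]
  · rintro m hm hodd p (rfl | hp) hgrid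
    · exact absurd ((even_iff_exists_int_div_eq_half hm.ne').2 hgrid) hodd
    · exact hp.1
  · rintro ⟨L, hL⟩
    exact not_tendsto_ite_even (by simp) L hL
end
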